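/- For any de Bruijn sequence x of order k over a q-ary alphabet (viewed as a linear string of length q^k), with k ≥ q+1, the duplication-with-transposition distance from its root satisfies f(x) ≥ (q^k - k + 1)/(2(k-1)). -/

import Mathlib

open scoped BigOperators

/-- One duplication-with-transposition step: `x = a·b·c·d → y = a·b·c·b·d`, `b` non-empty. -/
def DupStep {q : ℕ} (x y : List (Fin q)) : Prop :=
  ∃ a b c d : List (Fin q), b ≠ [] ∧ x = a ++ b ++ c ++ d ∧ y = a ++ b ++ c ++ b ++ d

/-- `DupPath m x y` : `y` is obtained from `x` by exactly `m` duplication steps. -/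
def DupPath {q : ℕ} : ℕ → List (Fin q) → List (Fin q) → Prop
  | 0, x, y => x = y
  | n + 1, x, y => ∃ z, DupStep x z ∧ DupPath n z y

/-- Hamming distance between two lists (of equal length in intended use). -/
def listHammingDist {q : ℕ} (b b' : List (Fin q)) : ℕ :=
  ((b.zip b').filter fun p => decide (p.1 ≠ p.2)).length

/-- One β-approximate duplication-with-transposition step. -/
def ApproxStep {q : ℕ} (β : ℝ) (x y : List (Fin q)) : Prop :=
  ∃ a b c bh d : List (Fin q), b ≠ [] ∧ bh.length = b.length ∧
    (listHammingDist b bh : ℝ) ≤ β * b.length ∧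
    x = a ++ b ++ c ++ d ∧ y = a ++ b ++ c ++ bh ++ d

/-- `ApproxPath β m x y` : `y` obtained from `x` by exactly `m` β-approximate duplications. -/
def ApproxPath {q : ℕ} (β : ℝ) : ℕ → List (Fin q) → List (Fin q) → Prop
  | 0, x, y => x = y
  | n + 1, x, y => ∃ z, ApproxStep β x z ∧ ApproxPath β n z y

/-- The root of a string: the subsequence of first occurrences of symbols. -/
def firstOccs {q : ℕ} (l : List (Fin q)) : List (Fin q) :=
  l.foldl (fun acc a => if a ∈ acc then acc else acc ++ [a]) []


/-!
Count the distinct length-`k` factors. The root has at most `q < k` letters, so it has none.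
A duplication `e·d ↦ e·b·d`, where `b` already occurs in `e`, creates no new factor lying
inside `e`, `b` or `d`; the only new ones straddle one of the two junctions, and at most `k - 1`
factors straddle a given junction. So each step adds at most `2(k-1)` factors, while a de Bruijn
sequence of order `k`, read linearly, has `q^k - k + 1` distinct ones.
-/

open Finset

section Windows

variable {α : Type*}

lemma window_append_of_add_le_length {u v : List α} {i k : ℕ} (h : i + k ≤ u.length) :
    ((u ++ v).drop i).take k = (u.drop i).take k := by
  rw [List.drop_append_of_le_length (by omega),
    List.take_append_of_le_length (by rw [List.length_drop]; omega)]

variable [DecidableEq α]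

/-- `(windows k x).card` is the paper's `N(x, k)`. -/
def windows (k : ℕ) (l : List α) : Finset (List α) :=
  (range (l.length + 1 - k)).image fun i => (l.drop i).take k

lemma mem_windows {k : ℕ} {l w : List α} :
    w ∈ windows k l ↔ ∃ i, i + k ≤ l.length ∧ (l.drop i).take k = w := by
  simp only [windows, mem_image, mem_range]
  exact ⟨fun ⟨i, hi, hw⟩ => ⟨i, by omega, hw⟩, fun ⟨i, hi, hw⟩ => ⟨i, by omega, hw⟩⟩

lemma windows_eq_empty_of_length_lt {k : ℕ} {l : List α} (h : l.length < k) :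
    windows k l = ∅ := by
  simp [windows, show l.length + 1 - k = 0 by omega]

lemma windows_subset_of_infix (k : ℕ) {l₁ l₂ : List α} (h : l₁ <:+: l₂) :
    windows k l₁ ⊆ windows k l₂ := by
  obtain ⟨s, t, rfl⟩ := h
  intro w hw
  obtain ⟨i, hi, rfl⟩ := mem_windows.1 hw
  refine mem_windows.2 ⟨s.length + i, by simp; omega, ?_⟩
  rw [List.append_assoc, List.drop_length_add_append, window_append_of_add_le_length hi]

lemma exists_windows_append_subset (k : ℕ) (u v : List α) :
    ∃ S : Finset (List α), S.card ≤ k - 1 ∧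
      windows k (u ++ v) ⊆ windows k u ∪ windows k v ∪ S := by
  refine ⟨(Ico (u.length + 1 - k) u.length).image fun i => ((u ++ v).drop i).take k,
    card_image_le.trans (by rw [Nat.card_Ico]; omega), fun w hw => ?_⟩
  obtain ⟨i, hi, rfl⟩ := mem_windows.1 hw
  rw [List.length_append] at hi
  simp only [mem_union]
  by_cases hu : i + k ≤ u.length
  · exact Or.inl <| Or.inl <| mem_windows.2
      ⟨i, hu, (window_append_of_add_le_length hu).symm⟩
  by_cases hv : u.length ≤ i
  · obtain ⟨j, rfl⟩ := Nat.exists_eq_add_of_le hv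
    exact Or.inl <| Or.inr <| mem_windows.2
      ⟨j, by omega, (List.drop_length_add_append j).symm ▸ rfl⟩
  · exact Or.inr <| mem_image.2 ⟨i, mem_Ico.2 ⟨by omega, by omega⟩, rfl⟩

lemma card_windows_of_injOn {k : ℕ} {l : List α}
    (h : Set.InjOn (fun i => (l.drop i).take k) (Set.Iio (l.length + 1 - k))) :
    (windows k l).card = l.length + 1 - k := by
  rw [windows, card_image_of_injOn (by rwa [coe_range]), card_range]

lemma card_windows_of_existsUnique_cyclic {k : ℕ} {l : List α} (hk : 0 < k)
    (h : ∀ b : List α, b.length = k →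
      ∃! i : ℕ, i < l.length ∧ ((l ++ l.take (k - 1)).drop i).take k = b) :
    (windows k l).card = l.length + 1 - k := by
  refine card_windows_of_injOn fun i hi j hj hij => ?_
  simp only [Set.mem_Iio] at hi hj
  have hlen : ((l.drop i).take k).length = k := by simp; omega
  exact (h _ hlen).unique ⟨by omega, window_append_of_add_le_length (by omega)⟩
    ⟨by omega, (window_append_of_add_le_length (by omega)).trans hij.symm⟩

end Windows

section Duplication

variable {q : ℕ}

lemma DupStep.card_windows_le {x y : List (Fin q)} (h : DupStep x y) (k : ℕ) :
    (windows k y).card ≤ (windows k x).card + 2 * (k - 1) := by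
  obtain ⟨a, b, c, d, -, rfl, rfl⟩ := h
  obtain ⟨S₁, hS₁, h₁⟩ := exists_windows_append_subset k (a ++ b ++ c) b
  obtain ⟨S₂, hS₂, h₂⟩ := exists_windows_append_subset k (a ++ b ++ c ++ b) d
  have he := windows_subset_of_infix k (List.prefix_append (a ++ b ++ c) d).isInfix
  have hb := windows_subset_of_infix k
    (List.infix_append a b c |>.trans (List.prefix_append (a ++ b ++ c) d).isInfix)
  have hd := windows_subset_of_infix k (List.suffix_append (a ++ b ++ c) d).isInfix
  have hsub : windows k (a ++ b ++ c ++ b ++ d) ⊆ windows k (a ++ b ++ c ++ d) ∪ (S₁ ∪ S₂) := by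
    simp only [subset_iff, mem_union] at h₁ h₂ he hb hd ⊢
    grind
  calc (windows k (a ++ b ++ c ++ b ++ d)).card
      ≤ (windows k (a ++ b ++ c ++ d)).card + (S₁.card + S₂.card) :=
        (card_le_card hsub).trans <|
          (card_union_le _ _).trans (Nat.add_le_add_left (card_union_le _ _) _)
    _ ≤ (windows k (a ++ b ++ c ++ d)).card + 2 * (k - 1) := by omega

lemma DupPath.card_windows_le (k : ℕ) :
    ∀ {m : ℕ} {x y : List (Fin q)}, DupPath m x y →
      (windows k y).card ≤ (windows k x).card + 2 * (k - 1) * m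
  | 0, x, y, h => by cases (h : x = y); simp
  | m + 1, x, y, ⟨z, hxz, hzy⟩ => by
    have := hxz.card_windows_le k
    have := DupPath.card_windows_le k hzy
    rw [Nat.mul_succ]
    omega

lemma DupPath.snoc : ∀ {m : ℕ} {x y z : List (Fin q)}, DupPath m x y → DupStep y z →
    DupPath (m + 1) x z
  | 0, x, y, z, h, hyz => ⟨z, (h : x = y) ▸ hyz, rfl⟩
  | _ + 1, _, _, _, ⟨w, hxw, hwy⟩, hyz => ⟨w, hxw, hwy.snoc hyz⟩

lemma DupStep.append_right {x y : List (Fin q)} (h : DupStep x y) (t : List (Fin q)) :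
    DupStep (x ++ t) (y ++ t) := by
  obtain ⟨a, b, c, d, hb, rfl, rfl⟩ := h
  exact ⟨a, b, c, d ++ t, hb, by simp, by simp⟩

lemma DupPath.append_right (t : List (Fin q)) : ∀ {m : ℕ} {x y : List (Fin q)},
    DupPath m x y → DupPath m (x ++ t) (y ++ t)
  | 0, x, y, h => congrArg (· ++ t) (h : x = y)
  | _ + 1, _, _, ⟨z, hxz, hzy⟩ => ⟨z ++ t, hxz.append_right t, hzy.append_right t⟩

lemma dupStep_append_singleton_of_mem {l : List (Fin q)} {s : Fin q} (h : s ∈ l) :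
    DupStep l (l ++ [s]) := by
  obtain ⟨a, c, rfl⟩ := List.append_of_mem h
  exact ⟨a, [s], c, [], by simp, by simp, by simp⟩

lemma firstOccs_append_singleton (l : List (Fin q)) (s : Fin q) :
    firstOccs (l ++ [s]) = if s ∈ firstOccs l then firstOccs l else firstOccs l ++ [s] := by
  rw [firstOccs, firstOccs, List.foldl_append]
  rfl

lemma nodup_firstOccs (l : List (Fin q)) : (firstOccs l).Nodup := by
  induction l using List.reverseRecOn with
  | nil => exact List.nodup_nil
  | append_singleton l s ih =>
    rw [firstOccs_append_singleton]
    split_ifs with hs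
    · exact ih
    · simpa using ih.concat hs

lemma length_firstOccs_le (l : List (Fin q)) : (firstOccs l).length ≤ q := by
  simpa using (nodup_firstOccs l).length_le_card

lemma firstOccs_subset (l : List (Fin q)) : firstOccs l ⊆ l := by
  induction l using List.reverseRecOn with
  | nil => exact List.Subset.refl _
  | append_singleton l s ih =>
    rw [firstOccs_append_singleton]
    split_ifs
    · exact List.subset_append_of_subset_left [s] ih
    · exact List.append_subset.2 ⟨List.subset_append_of_subset_left [s] ih,
        List.subset_append_right l [s]⟩

lemma exists_dupPath_firstOccs (l : List (Fin q)) : ∃ m, DupPath m (firstOccs l) l := by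
  induction l using List.reverseRecOn with
  | nil => exact ⟨0, rfl⟩
  | append_singleton l s ih =>
    obtain ⟨m, hm⟩ := ih
    rw [firstOccs_append_singleton]
    split_ifs with hs
    · exact ⟨m + 1, hm.snoc (dupStep_append_singleton_of_mem (firstOccs_subset l hs))⟩
    · exact ⟨m, hm.append_right [s]⟩

end Duplication

theorem stmt6_general (q k : ℕ) (hk : q + 1 ≤ k) (x : List (Fin q))
    (hlen : x.length = q ^ k)
    (hdb : ∀ b : List (Fin q), b.length = k →
      ∃! i : ℕ, i < q ^ k ∧ ((x ++ x.take (k - 1)).drop i).take k = b) :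
    ((q : ℝ) ^ k - (k : ℝ) + 1) / (2 * ((k : ℝ) - 1))
      ≤ ((sInf {m : ℕ | DupPath m (firstOccs x) x} : ℕ) : ℝ) := by
  obtain ⟨j, rfl⟩ : ∃ j, k = j + 1 := ⟨k - 1, by omega⟩
  set m := sInf {m : ℕ | DupPath m (firstOccs x) x}
  have hpath : DupPath m (firstOccs x) x := Nat.sInf_mem (exists_dupPath_firstOccs x)
  have hroot : windows (j + 1) (firstOccs x) = ∅ :=
    windows_eq_empty_of_length_lt ((length_firstOccs_le x).trans_lt hk)
  rw [← hlen] at hdb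
  have hcard := hpath.card_windows_le (j + 1)
  rw [hroot, card_empty, card_windows_of_existsUnique_cyclic j.succ_pos hdb, hlen,
    Nat.add_sub_cancel] at hcard
  have hreal : (q : ℝ) ^ (j + 1) ≤ 2 * j * m + j := by exact_mod_cast (by omega)
  push_cast
  rw [add_sub_cancel_right]
  refine div_le_of_le_mul₀ (by positivity) m.cast_nonneg ?_
  linarith

/-- a de Bruijn sequence of order `k ≥ q+1` (as a linear string of
length `q^k`) has duplication distance to its root at least `(q^k-k+1)/(2(k-1))`. -/
theorem stmt6 (q k : ℕ) (hq : 1 ≤ q) (hk : q + 1 ≤ k) (x : List (Fin q))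
    (hlen : x.length = q ^ k)
    (hdb : ∀ b : List (Fin q), b.length = k →
      ∃! i : ℕ, i < q ^ k ∧ ((x ++ x.take (k - 1)).drop i).take k = b) :
    ((q : ℝ) ^ k - (k : ℝ) + 1) / (2 * ((k : ℝ) - 1))
      ≤ ((sInf {m : ℕ | DupPath m (firstOccs x) x} : ℕ) : ℝ) :=
  stmt6_general q k hk x hlen hdb
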